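/- Let n be a nonnegative integer, let x, y ∈ H(n) with (x, y) a single-step reduction, and let x' ∈ H(n) with x' ≠ y such that (x, x') is a single-step reduction. Then there exists exactly one y' ∈ H(n) such that both (y, y') and (x', y') are single-step reductions. -/

import Mathlib

/-- The value of a word over the digits `{0,1,2}`, read as a (hyper)binary expansion:
`wordVal (x₀ … x_k) = Σ x_i · 2^(k-i)`. -/
def wordVal : List ℕ → ℕ
  | [] => 0
  | d :: w => d * 2 ^ w.length + wordVal w

/-- `Hyp n` is the set of hyperbinary expansions of `n`: words over `{0,1,2}` with
nonzero leading digit whose value is `n` (the empty word is the unique expansion of `0`). -/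
def Hyp (n : ℕ) : Set (List ℕ) :=
  {w | (∀ d ∈ w, d ≤ 2) ∧ w.head? ≠ some 0 ∧ wordVal w = n}

/-- Single-step reduction of type `→` : `(x02y, x10y)` or `(2y, 10y)`. -/
def StepArrow (a b : List ℕ) : Prop :=
  (∃ x y : List ℕ, a = x ++ 0 :: 2 :: y ∧ b = x ++ 1 :: 0 :: y) ∨
    (∃ y : List ℕ, a = 2 :: y ∧ b = 1 :: 0 :: y)

/-- Single-step reduction of type `↠` : `(x12y, x20y)`. -/
def StepDouble (a b : List ℕ) : Prop :=
  ∃ x y : List ℕ, a = x ++ 1 :: 2 :: y ∧ b = x ++ 2 :: 0 :: y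

/-- A single-step reduction (of either type). -/
def Step (a b : List ℕ) : Prop := StepArrow a b ∨ StepDouble a b

/-- `bFun n` is the number of hyperbinary expansions of `n`. -/
noncomputable def bFun (n : ℕ) : ℕ := (Hyp n).ncard

/-- The set of arcs of the graph `A(n)`: labeled single-step reductions between
hyperbinary expansions of `n`. -/
def arcs (n : ℕ) : Set (List ℕ × List ℕ) :=
  {p | p.1 ∈ Hyp n ∧ p.2 ∈ Hyp n ∧ Step p.1 p.2}

/-- `aFun n` is the number of arcs of `A(n)`. -/
noncomputable def aFun (n : ℕ) : ℕ := (arcs n).ncard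

/-- The cyclomatic number `v(n) = a(n) - b(n) + 1` of the connected graph `A(n)`. -/
noncomputable def vFun (n : ℕ) : ℕ := aFun n + 1 - bFun n

/- ## Auxiliary machinery -/

def strip (w : List ℕ) : List ℕ := w.dropWhile (· == 0)
def pad (L : ℕ) (w : List ℕ) : List ℕ := List.replicate (L - w.length) 0 ++ w
def Rw (a b : List ℕ) (i : ℕ) : Prop :=
  a.getD i 0 ≤ 1 ∧ a.getD (i+1) 0 = 2 ∧ b = (a.set i (a.getD i 0 + 1)).set (i+1) 0

lemma wordVal_append (u v : List ℕ) :
    wordVal (u ++ v) = wordVal u * 2 ^ v.length + wordVal v := by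
  induction u with
  | nil => simp [wordVal]
  | cons d u ih => simp [wordVal, ih, List.length_append, pow_add]; ring

lemma strip_eq_self {w : List ℕ} (hw : w.head? ≠ some 0) : strip w = w := by
  cases w with
  | nil => rfl
  | cons c t =>
    simp only [List.head?_cons, ne_eq, Option.some.injEq] at hw
    simp [strip, List.dropWhile_cons, hw]

lemma strip_replicate_append (s : ℕ) (w : List ℕ) :
    strip (List.replicate s 0 ++ w) = strip w := by
  induction s with
  | zero => rfl
  | succ s ih => simpa [List.replicate_succ, strip, List.dropWhile_cons] using ih

lemma strip_pad (L : ℕ) {w : List ℕ} (hw : w.head? ≠ some 0) : strip (pad L w) = w := by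
  rw [pad, strip_replicate_append, strip_eq_self hw]

lemma head?_strip (w : List ℕ) : (strip w).head? ≠ some 0 := by
  induction w with
  | nil => simp [strip]
  | cons c t ih =>
    by_cases hc : c = 0
    · simpa [strip, List.dropWhile_cons, hc] using ih
    · simp [strip, List.dropWhile_cons, hc]

lemma step_val {a b : List ℕ} (h : Step a b) : wordVal b = wordVal a := by
  rcases h with (⟨u,v,rfl,rfl⟩|⟨v,rfl,rfl⟩)|⟨u,v,rfl,rfl⟩ <;>
    simp [wordVal_append, wordVal, pow_succ] <;> ring

lemma step_le2 {a b : List ℕ} (h : Step a b) (ha : ∀ d ∈ a, d ≤ 2) : ∀ d ∈ b, d ≤ 2 := by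
  rcases h with (⟨u,v,rfl,rfl⟩|⟨v,rfl,rfl⟩)|⟨u,v,rfl,rfl⟩ <;> intro d hd <;>
    simp only [List.mem_append, List.mem_cons] at hd ha ⊢ <;>
    rcases hd with h|h|h|h <;> first
      | omega
      | (exact ha d (by tauto))

lemma step_len {a b : List ℕ} (h : Step a b) : b.length ≤ a.length + 1 := by
  rcases h with (⟨u,v,rfl,rfl⟩|⟨v,rfl,rfl⟩)|⟨u,v,rfl,rfl⟩ <;> simp

lemma getD_pat_fst (u v : List ℕ) (c1 c2 : ℕ) :
    (u ++ c1 :: c2 :: v).getD u.length 0 = c1 := by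
  rw [List.getD_eq_getElem?_getD, List.getElem?_append_right (le_refl _)]
  simp

lemma getD_pat_snd (u v : List ℕ) (c1 c2 : ℕ) :
    (u ++ c1 :: c2 :: v).getD (u.length + 1) 0 = c2 := by
  rw [List.getD_eq_getElem?_getD, List.getElem?_append_right (by omega)]
  simp

lemma set_pat_fst (u v : List ℕ) (c1 c2 e : ℕ) :
    (u ++ c1 :: c2 :: v).set u.length e = u ++ e :: c2 :: v := by
  simp [List.set_append]

lemma set_pat_snd (u v : List ℕ) (c1 c2 e : ℕ) :
    (u ++ c1 :: c2 :: v).set (u.length + 1) e = u ++ c1 :: e :: v := by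
  rw [List.set_append]
  simp

lemma getD_pat_fst' (u v : List ℕ) (c1 c2 : ℕ) {i : ℕ} (h : u.length = i) :
    (u ++ c1 :: c2 :: v).getD i 0 = c1 := h ▸ getD_pat_fst u v c1 c2

lemma set_pat_fst' (u v : List ℕ) (c1 c2 e : ℕ) {i : ℕ} (h : u.length = i) :
    (u ++ c1 :: c2 :: v).set i e = u ++ e :: c2 :: v := h ▸ set_pat_fst u v c1 c2 e

lemma set_pat_snd' (u v : List ℕ) (c1 c2 e : ℕ) {i : ℕ} (h : u.length = i) :
    (u ++ c1 :: c2 :: v).set (i + 1) e = u ++ c1 :: e :: v := h ▸ set_pat_snd u v c1 c2 e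

lemma rw_pattern (u v : List ℕ) (d : ℕ) (hd : d ≤ 1) :
    Rw (u ++ d :: 2 :: v) (u ++ (d+1) :: 0 :: v) u.length := by
  refine ⟨by rw [getD_pat_fst]; exact hd, getD_pat_snd u v d 2, ?_⟩
  rw [getD_pat_fst, set_pat_fst, set_pat_snd]

lemma rw_lt {A B : List ℕ} {i : ℕ} (h : Rw A B i) : i + 1 < A.length := by
  by_contra hc
  have h1 : A.getD (i+1) 0 = 0 := by
    rw [List.getD_eq_getElem?_getD, List.getElem?_eq_none (by omega)]
    rfl
  have h2 := h.2.1
  omega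

lemma rw_len {A B : List ℕ} {i : ℕ} (h : Rw A B i) : B.length = A.length := by
  rw [h.2.2]; simp

lemma rw_getD {A B : List ℕ} {i : ℕ} (h : Rw A B i) (m : ℕ) :
    B.getD m 0 = if m = i then A.getD i 0 + 1 else if m = i + 1 then 0 else A.getD m 0 := by
  have hlt := rw_lt h
  rw [h.2.2]
  simp only [List.getD_eq_getElem?_getD, List.getElem?_set, List.length_set]
  rcases eq_or_ne m i with rfl | h1
  · rw [if_neg (by omega), if_pos rfl, if_pos (by omega), if_pos rfl]
    simp
  · rcases eq_or_ne m (i+1) with rfl | h2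
    · rw [if_pos rfl, if_pos (by omega), if_neg (by omega), if_pos rfl]
      simp
    · rw [if_neg (by omega), if_neg (by omega), if_neg h2, if_neg h1]

lemma rw_disj {A B C : List ℕ} {i j : ℕ} (hB : Rw A B i) (hC : Rw A C j) :
    i + 1 ≠ j ∧ j + 1 ≠ i := by
  constructor <;> rintro rfl
  · have := hC.1; have := hB.2.1; omega
  · have := hB.1; have := hC.2.1; omega

lemma rw_decomp {A B : List ℕ} {i : ℕ} (h : Rw A B i) :
    ∃ u v d, d ≤ 1 ∧ u.length = i ∧ A = u ++ d :: 2 :: v ∧ B = u ++ (d+1) :: 0 :: v := by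
  have hlt := rw_lt h
  have hi : i < A.length := by omega
  have hu : (A.take i).length = i := by simp [List.length_take]; omega
  have hAeq : A = A.take i ++ A.getD i 0 :: A.getD (i+1) 0 :: A.drop (i+2) := by
    rw [List.getD_eq_getElem A 0 hi, List.getD_eq_getElem A 0 hlt]
    conv_lhs => rw [← List.take_append_drop i A]
    congr 1
    rw [List.drop_eq_getElem_cons hi]
    congr 1
    rw [show i + 2 = (i+1) + 1 by ring, ← List.drop_eq_getElem_cons hlt]
  refine ⟨A.take i, A.drop (i+2), A.getD i 0, h.1, hu, by rw [h.2.1] at hAeq; exact hAeq, ?_⟩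
  rw [h.2.2]
  have h21 := h.2.1
  conv_lhs => rw [hAeq, h21]
  rw [getD_pat_fst' _ _ _ _ hu, set_pat_fst' _ _ _ _ _ hu, set_pat_snd' _ _ _ _ _ hu]

lemma step_strip (u v : List ℕ) (d : ℕ) (hd : d ≤ 1) :
    Step (strip (u ++ d :: 2 :: v)) (strip (u ++ (d+1) :: 0 :: v)) := by
  have key : ∀ (c : ℕ) (w : List ℕ), strip (u ++ c :: w) =
      if (strip u).isEmpty then strip (c :: w) else strip u ++ c :: w := by
    intro c w
    rw [strip, strip, strip, List.dropWhile_append]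
  cases hu : strip u with
  | nil =>
    interval_cases d
    · rw [key, key, hu]
      simp only [List.isEmpty_nil, if_true]
      have h1 : strip (0 :: 2 :: v) = 2 :: v := by simp [strip, List.dropWhile_cons]
      have h2 : strip ((0+1) :: 0 :: v) = 1 :: 0 :: v := by simp [strip, List.dropWhile_cons]
      rw [h1, h2]
      exact Or.inl (Or.inr ⟨v, rfl, rfl⟩)
    · rw [key, key, hu]
      simp only [List.isEmpty_nil, if_true]
      have h1 : strip (1 :: 2 :: v) = 1 :: 2 :: v := by simp [strip, List.dropWhile_cons]
      have h2 : strip ((1+1) :: 0 :: v) = 2 :: 0 :: v := by simp [strip, List.dropWhile_cons]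
      rw [h1, h2]
      exact Or.inr ⟨[], v, rfl, rfl⟩
  | cons h t =>
    rw [key, key, hu]
    simp only [List.isEmpty_cons, if_false, Bool.false_eq_true]
    interval_cases d
    · exact Or.inl (Or.inl ⟨h :: t, v, rfl, rfl⟩)
    · exact Or.inr ⟨h :: t, v, rfl, rfl⟩

lemma rw_step {a B : List ℕ} {L i : ℕ} (h : Rw (pad L a) B i) (ha : a.head? ≠ some 0) :
    Step a (strip B) := by
  obtain ⟨u, v, d, hd, -, hA, hB⟩ := rw_decomp h
  have hstrip : a = strip (u ++ d :: 2 :: v) := by rw [← hA, strip_pad _ ha]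
  rw [hstrip, hB]
  exact step_strip u v d hd

lemma step_rw {a b : List ℕ} (h : Step a b) (L : ℕ) (hL : b.length ≤ L) :
    ∃ i, Rw (pad L a) (pad L b) i := by
  rcases h with (⟨u,v,rfl,rfl⟩|⟨v,rfl,rfl⟩)|⟨u,v,rfl,rfl⟩
  · refine ⟨(List.replicate (L - (u ++ 0 :: 2 :: v).length) 0 ++ u).length, ?_⟩
    have hlen : (u ++ 0 :: 2 :: v).length = (u ++ 1 :: 0 :: v).length := by simp
    have := rw_pattern (List.replicate (L - (u ++ 0 :: 2 :: v).length) 0 ++ u) v 0 (by norm_num)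
    simpa [pad, hlen, List.append_assoc] using this
  · refine ⟨(List.replicate (L - (1 :: 0 :: v).length) 0).length, ?_⟩
    have h1 : pad L (2 :: v) = List.replicate (L - (1 :: 0 :: v).length) 0 ++ 0 :: 2 :: v := by
      rw [pad]
      have : L - (2 :: v).length = (L - (1 :: 0 :: v).length) + 1 := by
        simp only [List.length_cons] at hL ⊢; omega
      rw [this, List.replicate_succ']
      simp
    have h2 : pad L (1 :: 0 :: v) = List.replicate (L - (1 :: 0 :: v).length) 0 ++ 1 :: 0 :: v := rfl
    rw [h1, h2]
    have := rw_pattern (List.replicate (L - (1 :: 0 :: v).length) 0) v 0 (by norm_num)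
    simpa using this
  · refine ⟨(List.replicate (L - (u ++ 1 :: 2 :: v).length) 0 ++ u).length, ?_⟩
    have hlen : (u ++ 1 :: 2 :: v).length = (u ++ 2 :: 0 :: v).length := by simp
    have := rw_pattern (List.replicate (L - (u ++ 1 :: 2 :: v).length) 0 ++ u) v 1 (le_refl _)
    simpa [pad, hlen, List.append_assoc] using this

lemma rw_comm {A B C : List ℕ} {i j : ℕ} (hB : Rw A B i) (hC : Rw A C j) (hij : i ≠ j) :
    Rw B ((B.set j (B.getD j 0 + 1)).set (j+1) 0) j ∧
    Rw C ((B.set j (B.getD j 0 + 1)).set (j+1) 0) i := by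
  obtain ⟨d1, d2⟩ := rw_disj hB hC
  have gBj : B.getD j 0 = A.getD j 0 := by
    rw [rw_getD hB, if_neg (Ne.symm hij), if_neg (Ne.symm d1)]
  have gBj1 : B.getD (j+1) 0 = A.getD (j+1) 0 := by
    rw [rw_getD hB, if_neg d2, if_neg (by omega)]
  have gCi : C.getD i 0 = A.getD i 0 := by
    rw [rw_getD hC, if_neg hij, if_neg (Ne.symm d2)]
  have gCi1 : C.getD (i+1) 0 = A.getD (i+1) 0 := by
    rw [rw_getD hC, if_neg d1, if_neg (by omega)]
  refine ⟨⟨by rw [gBj]; exact hC.1, by rw [gBj1]; exact hC.2.1, rfl⟩,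
    by rw [gCi]; exact hB.1, by rw [gCi1]; exact hB.2.1, ?_⟩
  rw [gBj, gCi, hB.2.2, hC.2.2]
  rw [List.set_comm _ _ (show i + 1 ≠ j from d1)]
  rw [List.set_comm _ _ (show i ≠ j from hij)]
  rw [List.set_comm _ _ (show i + 1 ≠ j + 1 by omega)]
  rw [List.set_comm _ _ (show i ≠ j + 1 from Ne.symm d2)]

lemma rw_unique {A B C E : List ℕ} {i j k l : ℕ}
    (hB : Rw A B i) (hC : Rw A C j) (hij : i ≠ j)
    (hk : Rw B E k) (hl : Rw C E l) : k = j ∧ l = i := by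
  obtain ⟨d1, d2⟩ := rw_disj hB hC
  have gBi1 : B.getD (i+1) 0 = 0 := by
    rw [rw_getD hB, if_neg (by omega), if_pos rfl]
  have gCi1 : C.getD (i+1) 0 = 2 := by
    rw [rw_getD hC, if_neg d1, if_neg (by omega)]; exact hB.2.1
  have gBj1 : B.getD (j+1) 0 = 2 := by
    rw [rw_getD hB, if_neg d2, if_neg (by omega)]; exact hC.2.1
  have gCj1 : C.getD (j+1) 0 = 0 := by
    rw [rw_getD hC, if_neg (by omega), if_pos rfl]
  have hli : l = i := by
    by_contra hli
    have e1 := rw_getD hk (i+1)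
    have e2 := rw_getD hl (i+1)
    rw [e1] at e2
    have hl1 := hl.1
    have hne1 : i + 1 ≠ l := by
      intro h; rw [← h] at hl1; omega
    rw [if_neg hne1, if_neg (by omega : i + 1 ≠ l + 1), gCi1] at e2
    rcases eq_or_ne (i+1) k with h | h
    · rw [if_pos h, ← h, gBi1] at e2; omega
    · rw [if_neg h] at e2
      rcases eq_or_ne (i+1) (k+1) with h' | h'
      · rw [if_pos h'] at e2; omega
      · rw [if_neg h', gBi1] at e2; omega
  subst hli
  refine ⟨?_, rfl⟩
  by_contra hkj
  have e1 := rw_getD hk (j+1)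
  have e2 := rw_getD hl (j+1)
  rw [e1] at e2
  rw [if_neg d2, if_neg (by omega : j + 1 ≠ l + 1), gCj1] at e2
  have hk1 := hk.1
  have hne1 : j + 1 ≠ k := by
    intro h; rw [← h] at hk1; omega
  rw [if_neg hne1, if_neg (by omega : j + 1 ≠ k + 1), gBj1] at e2
  omega

/-- If `(x, y)` and `(x, x')` are distinct single-step reductions inside `H(n)`
(i.e. `x' ≠ y`), then there is exactly one `y' ∈ H(n)` such that both `(y, y')`
and `(x', y')` are single-step reductions. -/
theorem step_diamond (n : ℕ) (x y x' : List ℕ)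
    (hx : x ∈ Hyp n) (hy : y ∈ Hyp n) (hx' : x' ∈ Hyp n)
    (hxy : Step x y) (hxx' : Step x x') (hne : x' ≠ y) :
    ∃! y' : List ℕ, y' ∈ Hyp n ∧ Step y y' ∧ Step x' y' := by
  obtain ⟨hx2, hxh, hxv⟩ := hx
  obtain ⟨hy2, hyh, hyv⟩ := hy
  obtain ⟨hx'2, hx'h, hx'v⟩ := hx'
  set L := x.length + 2 with hL
  have hyL : y.length ≤ L := le_trans (step_len hxy) (by omega)
  have hx'L : x'.length ≤ L := le_trans (step_len hxx') (by omega)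
  obtain ⟨i, hi⟩ := step_rw hxy L hyL
  obtain ⟨j, hj⟩ := step_rw hxx' L hx'L
  have hij : i ≠ j := by
    rintro rfl
    apply hne
    have hpq : pad L x' = pad L y := by rw [hi.2.2, hj.2.2]
    rw [← strip_pad L hx'h, hpq, strip_pad L hyh]
  obtain ⟨h1, h2⟩ := rw_comm hi hj hij
  set D := ((pad L y).set j ((pad L y).getD j 0 + 1)).set (j+1) 0 with hD
  have hs1 : Step y (strip D) := rw_step h1 hyh
  have hs2 : Step x' (strip D) := rw_step h2 hx'h
  refine ⟨strip D, ⟨⟨step_le2 hs2 hx'2, head?_strip D, (step_val hs2).trans hx'v⟩, hs1, hs2⟩, ?_⟩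
  rintro z ⟨⟨hz2, hzh, hzv⟩, hyz, hx'z⟩
  have hzL : z.length ≤ L := by
    have := step_len hyz
    have := step_len hxy
    omega
  obtain ⟨k, hk⟩ := step_rw hyz L hzL
  obtain ⟨l, hl⟩ := step_rw hx'z L hzL
  obtain ⟨hkj, hli⟩ := rw_unique hi hj hij hk hl
  subst hkj
  have hEz : pad L z = D := hk.2.2
  rw [← strip_pad L hzh, hEz]
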